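/- arXiv:2208.08402 — 3 statements merged into one kernel-verified Lean document; each statement's English description precedes it below -/
import Mathlib

section
/- For α ∈ (0,1] and all u, v ∈ ℝ³, the power-law nonlinearity satisfies the strong monotonicity bound (u − v) · (a(u) − a(v)) ≥ α (|u| + |v|)^{α−1} |u − v|². -/
/-!
Write `a = ‖u‖`, `b = ‖v‖`, `t = ⟪u, v⟫`. Both sides of the inequality are affine in `t`, which
ranges over `[-a b, a b]` by Cauchy–Schwarz, so it suffices to check the two endpoints.
At `t = a b` the inequality reads `α (a + b)^(α-1) (a - b)² ≤ (a - b) (a^α - b^α)`, which follows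
from the tangent-line bound for the concave function `x ↦ x^α`; at `t = -a b` it reads
`α (a + b)^(α+1) ≤ (a + b) (a^α + b^α)`, which follows from `α ≤ 1` and subadditivity of `x ↦ x^α`.
-/

open scoped RealInnerProductSpace

namespace Real

variable {α a b : ℝ}

lemma rpow_sub_one_mul_self (hα : α ≠ 0) (ha : 0 ≤ a) : a ^ (α - 1) * a = a ^ α := by
  simpa using (rpow_add_one' ha (by simpa using hα) (y := α - 1)).symm

lemma mul_rpow_sub_one_mul_sub_le_rpow_sub_rpow (hα₀ : 0 ≤ α) (hα₁ : α ≤ 1) (hb : 0 ≤ b)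
    (hba : b ≤ a) : α * a ^ (α - 1) * (a - b) ≤ a ^ α - b ^ α := by
  obtain rfl | ha := (hb.trans hba).eq_or_lt
  · obtain rfl : b = 0 := le_antisymm hba hb
    simp
  have hamgm : b ^ α * a ^ (1 - α) ≤ α * b + (1 - α) * a :=
    geom_mean_le_arith_mean2_weighted hα₀ (by linarith) hb ha.le (by ring)
  have hcancel : a ^ (1 - α) * a ^ (α - 1) = 1 := by
    rw [← rpow_add ha]; norm_num
  have hself : a ^ (α - 1) * a = a ^ α := by
    rw [← rpow_add_one ha.ne']; norm_num
  have hpos : 0 ≤ a ^ (α - 1) := by positivity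
  have := mul_le_mul_of_nonneg_right hamgm hpos
  rw [mul_assoc, hcancel, mul_one] at this
  linear_combination this + hself

lemma mul_add_rpow_sub_one_mul_sq_le_sub_mul_rpow_sub_rpow (hα₀ : 0 ≤ α) (hα₁ : α ≤ 1)
    (ha : 0 ≤ a) (hb : 0 ≤ b) :
    α * (a + b) ^ (α - 1) * (a - b) ^ 2 ≤ (a - b) * (a ^ α - b ^ α) := by
  wlog hba : b ≤ a generalizing a b
  · have := this hb ha (le_of_not_ge hba)
    rw [add_comm b a] at this
    linear_combination this
  obtain rfl | hlt := hba.eq_or_lt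
  · simp
  have hmono : (a + b) ^ (α - 1) ≤ a ^ (α - 1) :=
    rpow_le_rpow_of_nonpos (hb.trans_lt hlt) (by linarith) (by linarith)
  have htangent := mul_rpow_sub_one_mul_sub_le_rpow_sub_rpow hα₀ hα₁ hb hba
  have hsub : 0 ≤ a - b := by linarith
  have := mul_le_mul_of_nonneg_right hmono (mul_nonneg hα₀ (mul_nonneg hsub hsub))
  nlinarith

lemma mul_add_rpow_sub_one_mul_sq_le_add_mul_rpow_add_rpow (hα₀ : 0 < α) (hα₁ : α ≤ 1)
    (ha : 0 ≤ a) (hb : 0 ≤ b) :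
    α * (a + b) ^ (α - 1) * (a + b) ^ 2 ≤ (a + b) * (a ^ α + b ^ α) := by
  have hab : 0 ≤ a + b := add_nonneg ha hb
  have hself := rpow_sub_one_mul_self hα₀.ne' hab
  have hsubadd := rpow_add_le_add_rpow ha hb hα₀.le hα₁
  have hpos : 0 ≤ (a + b) ^ α := by positivity
  calc α * (a + b) ^ (α - 1) * (a + b) ^ 2 = α * ((a + b) * (a + b) ^ α) := by
        rw [← hself]; ring
    _ ≤ 1 * ((a + b) * (a + b) ^ α) := by gcongr
    _ ≤ (a + b) * (a ^ α + b ^ α) := by rw [one_mul]; gcongr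

end Real

lemma mul_le_of_abs_le {A B r t : ℝ} (hpos : B * r ≤ A) (hneg : -(B * r) ≤ A) (ht : |t| ≤ r) :
    B * t ≤ A :=
  calc B * t ≤ |B * r| := by
        rw [abs_mul, abs_of_nonneg ((abs_nonneg t).trans ht)]
        exact (le_abs_self _).trans (by rw [abs_mul]; gcongr)
    _ ≤ A := abs_le'.mpr ⟨hpos, hneg⟩

lemma mul_add_rpow_sub_one_mul_le_of_abs_le {α a b t : ℝ} (hα₀ : 0 < α) (hα₁ : α ≤ 1)
    (ha : 0 ≤ a) (hb : 0 ≤ b) (ht : |t| ≤ a * b) :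
    α * (a + b) ^ (α - 1) * (a ^ 2 - 2 * t + b ^ 2) ≤
      a ^ (α - 1) * a ^ 2 - (a ^ (α - 1) + b ^ (α - 1)) * t + b ^ (α - 1) * b ^ 2 := by
  have hsame := Real.mul_add_rpow_sub_one_mul_sq_le_sub_mul_rpow_sub_rpow hα₀.le hα₁ ha hb
  have hopp := Real.mul_add_rpow_sub_one_mul_sq_le_add_mul_rpow_add_rpow hα₀ hα₁ ha hb
  rw [← Real.rpow_sub_one_mul_self hα₀.ne' ha, ← Real.rpow_sub_one_mul_self hα₀.ne' hb]
    at hsame hopp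
  have := mul_le_of_abs_le (A := a ^ (α - 1) * a ^ 2 + b ^ (α - 1) * b ^ 2
      - α * (a + b) ^ (α - 1) * (a ^ 2 + b ^ 2))
    (B := a ^ (α - 1) + b ^ (α - 1) - 2 * α * (a + b) ^ (α - 1))
    (by linear_combination hsame) (by linear_combination hopp) ht
  linear_combination this

theorem mul_add_norm_rpow_sub_one_mul_norm_sub_sq_le_inner {E : Type*}
    [NormedAddCommGroup E] [InnerProductSpace ℝ E] {α : ℝ} (hα₀ : 0 < α) (hα₁ : α ≤ 1)
    (u v : E) :
    α * (‖u‖ + ‖v‖) ^ (α - 1) * ‖u - v‖ ^ 2 ≤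
      ⟪u - v, (‖u‖ ^ (α - 1)) • u - (‖v‖ ^ (α - 1)) • v⟫ := by
  have hinner : ⟪u - v, (‖u‖ ^ (α - 1)) • u - (‖v‖ ^ (α - 1)) • v⟫ =
      ‖u‖ ^ (α - 1) * ‖u‖ ^ 2 - (‖u‖ ^ (α - 1) + ‖v‖ ^ (α - 1)) * ⟪u, v⟫
        + ‖v‖ ^ (α - 1) * ‖v‖ ^ 2 := by
    simp only [inner_sub_left, inner_sub_right, real_inner_smul_right,
      real_inner_self_eq_norm_sq, real_inner_comm v u]
    ring
  rw [hinner, norm_sub_sq_real]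
  exact mul_add_rpow_sub_one_mul_le_of_abs_le hα₀ hα₁ (norm_nonneg u) (norm_nonneg v)
    (abs_real_inner_le_norm u v)

/-- Strong monotonicity bound for the power-law nonlinearity:
`(u − v) · (a(u) − a(v)) ≥ α (|u| + |v|)^{α−1} |u − v|²`. -/
theorem stmt2 (α : ℝ) (hα : α ∈ Set.Ioc (0:ℝ) 1) (u v : EuclideanSpace ℝ (Fin 3)) :
    α * (‖u‖ + ‖v‖) ^ (α - 1) * ‖u - v‖ ^ 2 ≤
      ⟪u - v, (‖u‖ ^ (α - 1)) • u - (‖v‖ ^ (α - 1)) • v⟫ :=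
  mul_add_norm_rpow_sub_one_mul_norm_sub_sq_le_inner hα.1 hα.2 u v
end

section
/- For α ∈ (0,1] there exists c > 0 such that for all x, y ∈ ℝ³ the power-law nonlinearity a(z) = |z|^{α−1} z satisfies (x − y) · (a(x) − a(y)) ≥ c |a(x) − a(y)|^{(1+α)/α}. -/
open scoped RealInnerProductSpace

open Real

private lemma key_ineq9 {E : Type*} [NormedAddCommGroup E] [InnerProductSpace ℝ E]
    (β : ℝ) (hβ : 0 ≤ β) (u v : E) :
    (‖u‖ ^ β + ‖v‖ ^ β) / 2 * ‖u - v‖ ^ (2:ℕ) ≤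
      ⟪(‖u‖ ^ β) • u - (‖v‖ ^ β) • v, u - v⟫ := by
  have hu : ⟪u, u⟫ = ‖u‖ ^ (2:ℕ) := real_inner_self_eq_norm_sq u
  have hv : ⟪v, v⟫ = ‖v‖ ^ (2:ℕ) := real_inner_self_eq_norm_sq v
  have hd : ‖u - v‖ ^ (2:ℕ) = ‖u‖ ^ (2:ℕ) - 2 * ⟪u, v⟫ + ‖v‖ ^ (2:ℕ) :=
    norm_sub_sq_real u v
  have hsym : ⟪v, u⟫ = ⟪u, v⟫ := (real_inner_comm u v)
  have hmono : 0 ≤ (‖u‖ ^ β - ‖v‖ ^ β) * (‖u‖ ^ (2:ℕ) - ‖v‖ ^ (2:ℕ)) := by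
    rcases le_total ‖u‖ ‖v‖ with h | h
    · have h1 : ‖u‖ ^ β ≤ ‖v‖ ^ β := Real.rpow_le_rpow (norm_nonneg u) h hβ
      have h2 : ‖u‖ ^ (2:ℕ) ≤ ‖v‖ ^ (2:ℕ) := pow_le_pow_left₀ (norm_nonneg u) h 2
      nlinarith
    · have h1 : ‖v‖ ^ β ≤ ‖u‖ ^ β := Real.rpow_le_rpow (norm_nonneg v) h hβ
      have h2 : ‖v‖ ^ (2:ℕ) ≤ ‖u‖ ^ (2:ℕ) := pow_le_pow_left₀ (norm_nonneg v) h 2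
      nlinarith
  simp only [inner_sub_left, inner_sub_right, real_inner_smul_left]
  rw [hu, hv, hsym, hd]
  nlinarith [hmono]

private lemma chain_ineq9 (β d A B : ℝ) (hβ : 0 ≤ β) (hd : 0 ≤ d) (hA : 0 ≤ A)
    (hB : 0 ≤ B) (htri : d ≤ A + B) :
    (1/2) * (1/2) ^ β * d ^ (β + 2) ≤ (A ^ β + B ^ β) / 2 * d ^ (2:ℕ) := by
  rcases eq_or_lt_of_le hd with h0 | h0
  · rw [← h0, Real.zero_rpow (by positivity)]
    have : (0:ℝ) ^ (2:ℕ) = 0 := by norm_num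
    rw [this]
    simp
  · have hsplit : d ^ (β + 2) = d ^ β * d ^ (2:ℕ) := by
      rw [Real.rpow_add h0]
      norm_num [Real.rpow_natCast]
    rw [hsplit]
    have hhalf : (1/2:ℝ) ^ β * d ^ β = (d/2) ^ β := by
      rw [← Real.mul_rpow (by norm_num : (0:ℝ) ≤ 1/2) hd]
      ring_nf
    have hkey : (d/2) ^ β ≤ A ^ β + B ^ β := by
      rcases le_total A B with h | h
      · have hdB : d / 2 ≤ B := by linarith
        have h3 : (d/2) ^ β ≤ B ^ β := Real.rpow_le_rpow (by positivity) hdB hβ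
        have hApos : 0 ≤ A ^ β := Real.rpow_nonneg hA β
        linarith
      · have hdA : d / 2 ≤ A := by linarith
        have h3 : (d/2) ^ β ≤ A ^ β := Real.rpow_le_rpow (by positivity) hdA hβ
        have hBpos : 0 ≤ B ^ β := Real.rpow_nonneg hB β
        linarith
    have hd2 : 0 ≤ d ^ (2:ℕ) := by positivity
    calc (1/2) * (1/2) ^ β * (d ^ β * d ^ (2:ℕ))
        = ((1/2) ^ β * d ^ β) * d ^ (2:ℕ) / 2 := by ring
      _ = (d/2) ^ β * d ^ (2:ℕ) / 2 := by rw [hhalf]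
      _ ≤ (A ^ β + B ^ β) * d ^ (2:ℕ) / 2 := by
          apply div_le_div_of_nonneg_right (mul_le_mul_of_nonneg_right hkey hd2) (by norm_num)
      _ = (A ^ β + B ^ β) / 2 * d ^ (2:ℕ) := by ring

private lemma inv_eq9 (α : ℝ) (hα : α ∈ Set.Ioc (0:ℝ) 1)
    (x : EuclideanSpace ℝ (Fin 3)) :
    (‖(‖x‖ ^ (α - 1)) • x‖ ^ ((1 - α)/α)) • ((‖x‖ ^ (α - 1)) • x) = x := by
  obtain ⟨hα0, hα1⟩ := hα
  by_cases hx : x = 0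
  · simp [hx]
  · have hnx : 0 < ‖x‖ := norm_pos_iff.mpr hx
    have hnorm : ‖(‖x‖ ^ (α - 1)) • x‖ = ‖x‖ ^ α := by
      rw [norm_smul, Real.norm_eq_abs, abs_of_nonneg (Real.rpow_nonneg hnx.le _)]
      rw [← Real.rpow_add_one hnx.ne']
      norm_num
    rw [hnorm]
    have h2 : (‖x‖ ^ α) ^ ((1 - α)/α) = ‖x‖ ^ (1 - α) := by
      rw [← Real.rpow_mul hnx.le]
      congr 1
      field_simp
    rw [h2, smul_smul, ← Real.rpow_add hnx]
    have h3 : (1 - α) + (α - 1) = 0 := by ring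
    rw [h3, Real.rpow_zero, one_smul]

/-- Coercivity of the power-law nonlinearity `a(z) = |z|^{α−1} z`:
`(x − y) · (a(x) − a(y)) ≥ c |a(x) − a(y)|^{(1+α)/α}`. -/
theorem stmt9 (α : ℝ) (hα : α ∈ Set.Ioc (0:ℝ) 1) :
    ∃ c : ℝ, 0 < c ∧ ∀ x y : EuclideanSpace ℝ (Fin 3),
      c * ‖(‖x‖ ^ (α - 1)) • x - (‖y‖ ^ (α - 1)) • y‖ ^ ((1 + α)/α) ≤
        ⟪x - y, (‖x‖ ^ (α - 1)) • x - (‖y‖ ^ (α - 1)) • y⟫ := by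
  obtain ⟨hα0, hα1⟩ := hα
  set β : ℝ := (1 - α)/α with hβdef
  have hβ : 0 ≤ β := div_nonneg (by linarith) hα0.le
  refine ⟨(1/2) * (1/2) ^ β, by positivity, fun x y => ?_⟩
  set u : EuclideanSpace ℝ (Fin 3) := (‖x‖ ^ (α - 1)) • x with hu
  set v : EuclideanSpace ℝ (Fin 3) := (‖y‖ ^ (α - 1)) • y with hv
  have hxu : (‖u‖ ^ β) • u = x := inv_eq9 α ⟨hα0, hα1⟩ x
  have hyv : (‖v‖ ^ β) • v = y := inv_eq9 α ⟨hα0, hα1⟩ y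
  have hq : (1 + α)/α = β + 2 := by
    rw [hβdef]
    field_simp
    ring
  rw [hq, ← hxu, ← hyv]
  calc (1/2) * (1/2) ^ β * ‖u - v‖ ^ (β + 2)
      ≤ (‖u‖ ^ β + ‖v‖ ^ β) / 2 * ‖u - v‖ ^ (2:ℕ) :=
        chain_ineq9 β ‖u - v‖ ‖u‖ ‖v‖ hβ (norm_nonneg _) (norm_nonneg _)
          (norm_nonneg _) (norm_sub_le u v)
    _ ≤ ⟪(‖u‖ ^ β) • u - (‖v‖ ^ β) • v, u - v⟫ := key_ineq9 β hβ u v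
end

section
/- Let α ∈ (0,1] and let φ, h, E be elements of L^{1+α}(Γ;ℝ³), L^{1+α}(Γ;ℝ³), L^{(1+α)/α}(Γ;ℝ³) respectively, on a measure space (Γ,μ). Then for every ε > 0 there is C depending only on α, ε such that ∫_Γ φ · a(φ + h) dμ ≥ (1/2)‖φ + h‖_{L^{1+α}}^{1+α} − C ‖h‖_{L^{1+α}}^{1+α}, where a(x) = |x|^{α−1}x. -/
/-!
With `a(v) = ‖v‖^(α-1) v` (`powerMap α`) one has `⟪v, a v⟫ = ‖v‖^(1+α)` and `‖a v‖ = ‖v‖^α`. Writing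
`φ = (φ + h) - h`, the integrand is `‖φ + h‖^(1+α) - ⟪h, a(φ + h)⟫`, and Cauchy–Schwarz
followed by Young's inequality with exponents `1 + α`, `(1 + α)/α` and weight `1/2` on the
second factor bounds `⟪h, a(φ + h)⟫ ≤ C ‖h‖^(1+α) + ½ ‖φ + h‖^(1+α)` pointwise.
-/

open MeasureTheory
open scoped RealInnerProductSpace

lemma exists_mul_le_mul_rpow_add_mul_rpow {p q δ : ℝ} (hpq : p.HolderConjugate q)
    (hδ : 0 < δ) :
    ∃ C : ℝ, 0 < C ∧ ∀ a b : ℝ, 0 ≤ a → 0 ≤ b → a * b ≤ C * a ^ p + δ * b ^ q := by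
  -- Young's inequality applied to `a / t` and `b * t`, where `t ^ q / q = δ`.
  set t : ℝ := (q * δ) ^ q⁻¹
  have hq := hpq.symm.pos
  have ht : 0 < t := by positivity
  have htq : t ^ q = q * δ := by
    rw [← Real.rpow_mul (by positivity), inv_mul_cancel₀ hq.ne', Real.rpow_one]
  refine ⟨(p * t ^ p)⁻¹, by have := hpq.pos; positivity, fun a b ha hb => ?_⟩
  have young := Real.young_inequality_of_nonneg (div_nonneg ha ht.le)
    (mul_nonneg hb ht.le) hpq
  rw [Real.div_rpow ha ht.le, Real.mul_rpow hb ht.le, htq] at young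
  calc a * b = a / t * (b * t) := by field_simp
    _ ≤ _ := young
    _ = (p * t ^ p)⁻¹ * a ^ p + δ * b ^ q := by field_simp

lemma Real.holderConjugate_one_add_div {α : ℝ} (hα : 0 < α) :
    (1 + α).HolderConjugate ((1 + α) / α) := by
  rw [Real.holderConjugate_iff]
  exact ⟨by linarith, by field_simp⟩

section PowerMap

variable {E : Type*} [NormedAddCommGroup E] [InnerProductSpace ℝ E]

noncomputable def powerMap (α : ℝ) (v : E) : E := ‖v‖ ^ (α - 1) • v

lemma norm_powerMap {α : ℝ} (hα : α ≠ 0) (v : E) : ‖powerMap α v‖ = ‖v‖ ^ α := by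
  rw [powerMap, norm_smul, Real.norm_of_nonneg (by positivity),
    ← Real.rpow_add_one' (norm_nonneg v) (by simpa using hα), sub_add_cancel]

lemma inner_powerMap_self {α : ℝ} (hα : 1 + α ≠ 0) (v : E) :
    ⟪v, powerMap α v⟫ = ‖v‖ ^ (1 + α) := by
  rw [powerMap, real_inner_smul_right, real_inner_self_eq_norm_sq, ← Real.rpow_two,
    ← Real.rpow_add' (norm_nonneg v) (by convert hα using 1; ring)]
  ring_nf

lemma inner_powerMap_le {α : ℝ} (hα : 0 < α) (h v : E) :
    ⟪h, powerMap α v⟫ ≤ ‖h‖ * ‖v‖ ^ α :=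
  norm_powerMap hα.ne' v ▸ real_inner_le_norm h _

lemma sub_le_inner_powerMap_add {α C δ : ℝ} (hα : 0 < α)
    (young : ∀ a b : ℝ, 0 ≤ a → 0 ≤ b → a * b ≤ C * a ^ (1 + α) + δ * b ^ ((1 + α) / α))
    (φ h : E) :
    (1 - δ) * ‖φ + h‖ ^ (1 + α) - C * ‖h‖ ^ (1 + α) ≤ ⟪φ, powerMap α (φ + h)⟫ := by
  have split : ⟪φ, powerMap α (φ + h)⟫ =
      ‖φ + h‖ ^ (1 + α) - ⟪h, powerMap α (φ + h)⟫ := by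
    rw [← inner_powerMap_self (by linarith), ← inner_sub_left, add_sub_cancel_right]
  have pow_eq : (‖φ + h‖ ^ α) ^ ((1 + α) / α) = ‖φ + h‖ ^ (1 + α) := by
    rw [← Real.rpow_mul (norm_nonneg _), mul_div_cancel₀ _ hα.ne']
  have bound := young ‖h‖ (‖φ + h‖ ^ α) (norm_nonneg h) (by positivity)
  rw [pow_eq] at bound
  linarith [inner_powerMap_le hα h (φ + h)]

end PowerMap

theorem stmt15_general {Γ : Type*} [MeasurableSpace Γ] (μ : Measure Γ)
    (α : ℝ) (hα : α ∈ Set.Ioc (0:ℝ) 1) :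
    ∃ C : ℝ, 0 < C ∧
      ∀ φ h : Γ → EuclideanSpace ℝ (Fin 3), Measurable φ → Measurable h →
        Integrable (fun x => ‖φ x + h x‖ ^ (1 + α)) μ →
        Integrable (fun x => ‖h x‖ ^ (1 + α)) μ →
        Integrable (fun x =>
          ⟪φ x, (‖φ x + h x‖ ^ (α - 1)) • (φ x + h x)⟫) μ →
        (1/2) * (∫ x, ‖φ x + h x‖ ^ (1 + α) ∂μ)
            - C * (∫ x, ‖h x‖ ^ (1 + α) ∂μ)
          ≤ ∫ x, ⟪φ x, (‖φ x + h x‖ ^ (α - 1)) • (φ x + h x)⟫ ∂μ := by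
  obtain ⟨C, hC, young⟩ :=
    exists_mul_le_mul_rpow_add_mul_rpow (Real.holderConjugate_one_add_div hα.1) one_half_pos
  refine ⟨C, hC, fun φ h _ _ int_sum int_h int_inner => ?_⟩
  rw [← integral_const_mul, ← integral_const_mul,
    ← integral_sub (int_sum.const_mul _) (int_h.const_mul _)]
  refine integral_mono ((int_sum.const_mul _).sub (int_h.const_mul _)) int_inner fun x => ?_
  have pointwise := sub_le_inner_powerMap_add hα.1 young (φ x) (h x)
  rwa [sub_half] at pointwise

/-- Lower bound for the nonlinear term: for every `ε > 0` there is `C = C(α, ε)`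
with `∫ φ · a(φ + h) dμ ≥ (1/2)‖φ + h‖_{L^{1+α}}^{1+α} − C ‖h‖_{L^{1+α}}^{1+α}`,
where `a(x) = |x|^{α−1} x`. -/
theorem stmt15 {Γ : Type*} [MeasurableSpace Γ] (μ : Measure Γ)
    (α : ℝ) (hα : α ∈ Set.Ioc (0:ℝ) 1) (ε : ℝ) (hε : 0 < ε) :
    ∃ C : ℝ, 0 < C ∧
      ∀ φ h : Γ → EuclideanSpace ℝ (Fin 3), Measurable φ → Measurable h →
        Integrable (fun x => ‖φ x + h x‖ ^ (1 + α)) μ →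
        Integrable (fun x => ‖h x‖ ^ (1 + α)) μ →
        Integrable (fun x =>
          ⟪φ x, (‖φ x + h x‖ ^ (α - 1)) • (φ x + h x)⟫) μ →
        (1/2) * (∫ x, ‖φ x + h x‖ ^ (1 + α) ∂μ)
            - C * (∫ x, ‖h x‖ ^ (1 + α) ∂μ)
          ≤ ∫ x, ⟪φ x, (‖φ x + h x‖ ^ (α - 1)) • (φ x + h x)⟫ ∂μ :=
  stmt15_general μ α hα
end
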